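/- Let a, b, c be real numbers with b ≠ 0, let a₀ : ℝ → ℝ and let a₁ : ℝ → ℝ be continuously differentiable. Define φ(x̄) = (x̄ − c(1 + a·x̄))/(b(1 + a·x̄)), t(x̄) = 1 + a·x̄, ā₁(x̄) = a₁(φ(x̄))/(b³ t(x̄)⁶), and ā₀(x̄) = a₀(φ(x̄))/(b⁴ t(x̄)⁸) − 3a·a₁(φ(x̄))/(b³ t(x̄)⁷) on {x̄ : t(x̄) ≠ 0}. Then for every x̄ with t(x̄) ≠ 0 and a₁(φ(x̄)) ≠ 0, one has (−2ā₀(x̄) + ā₁′(x̄))³/ā₁(x̄)⁴ = (−2a₀ + a₁′)³/a₁⁴ evaluated at φ(x̄). -/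

import Mathlib

/-- The point transformation of the independent variable:
`φ(x̄) = (x̄ − c(1 + a x̄)) / (b(1 + a x̄))`. -/
noncomputable def phi (a b c : ℝ) (x : ℝ) : ℝ :=
  (x - c * (1 + a * x)) / (b * (1 + a * x))

/-- The transformed coefficient `ā₁(x̄) = a₁(φ(x̄)) / (b³ (1 + a x̄)⁶)`
for the canonical form `y⁽⁴⁾ + a₁ y′ + a₀ y = 0`. -/
noncomputable def abar1 (a b c : ℝ) (a1 : ℝ → ℝ) (x : ℝ) : ℝ :=
  a1 (phi a b c x) / (b ^ 3 * (1 + a * x) ^ 6)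

/-- The transformed coefficient
`ā₀(x̄) = a₀(φ(x̄))/(b⁴ (1+a x̄)⁸) − 3a a₁(φ(x̄))/(b³ (1+a x̄)⁷)`
for the canonical form `y⁽⁴⁾ + a₁ y′ + a₀ y = 0`. -/
noncomputable def abar0 (a b c : ℝ) (a0 a1 : ℝ → ℝ) (x : ℝ) : ℝ :=
  a0 (phi a b c x) / (b ^ 4 * (1 + a * x) ^ 8)
    - 3 * a * a1 (phi a b c x) / (b ^ 3 * (1 + a * x) ^ 7)

/-!
With `w = b (1 + a x̄)²` one has `φ' = 1 / w`, so `ā₁ = a₁(φ) / w³`, and differentiating gives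
`ā₁' = a₁'(φ) / w⁴ − 6a a₁(φ) / (b³ (1 + a x̄)⁷)`. The second term cancels against the
correction term of `−2 ā₀`, so `−2 ā₀ + ā₁' = (−2 a₀ + a₁')(φ) / w⁴` is a relative invariant
of weight 4 while `ā₁` has weight 3; in `(weight 4)³ / (weight 3)⁴` the factors of `w` cancel.
-/

theorem div_pow_four_pow_three_div_div_pow_three_pow_four {K : Type*} [Field K]
    {u v w : K} (hw : w ≠ 0) :
    (u / w ^ 4) ^ 3 / (v / w ^ 3) ^ 4 = u ^ 3 / v ^ 4 := by
  rw [div_pow, div_pow, ← pow_mul, ← pow_mul, mul_comm 4 3]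
  exact div_div_div_cancel_right₀ (pow_ne_zero _ hw) _ _

theorem hasDerivAt_one_add_mul (a x : ℝ) : HasDerivAt (fun y : ℝ => 1 + a * y) a x := by
  simpa using ((hasDerivAt_id x).const_mul a).const_add 1

section Transformation

variable {a b c x : ℝ}

theorem hasDerivAt_phi (hb : b ≠ 0) (ht : 1 + a * x ≠ 0) :
    HasDerivAt (phi a b c) (1 / (b * (1 + a * x) ^ 2)) x := by
  have hlin := hasDerivAt_one_add_mul a x
  have hquot : HasDerivAt (fun y => (y - c * (1 + a * y)) / (b * (1 + a * y)))
      (((1 - c * a) * (b * (1 + a * x)) - (x - c * (1 + a * x)) * (b * a))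
        / (b * (1 + a * x)) ^ 2) x :=
    ((hasDerivAt_id' x).sub (hlin.const_mul c)).div (hlin.const_mul b) (mul_ne_zero hb ht)
  refine hquot.congr_deriv ?_
  field_simp
  ring

theorem hasDerivAt_abar1 {a1 : ℝ → ℝ} {d : ℝ} (hb : b ≠ 0) (ht : 1 + a * x ≠ 0)
    (ha1 : HasDerivAt a1 d (phi a b c x)) :
    HasDerivAt (abar1 a b c a1)
      (d / (b ^ 4 * (1 + a * x) ^ 8) - 6 * a * a1 (phi a b c x) / (b ^ 3 * (1 + a * x) ^ 7))
      x := by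
  have hlin := hasDerivAt_one_add_mul a x
  have hquot : HasDerivAt (fun y => a1 (phi a b c y) / (b ^ 3 * (1 + a * y) ^ 6))
      ((d * (1 / (b * (1 + a * x) ^ 2)) * (b ^ 3 * (1 + a * x) ^ 6)
        - a1 (phi a b c x) * (b ^ 3 * (6 * (1 + a * x) ^ 5 * a)))
        / (b ^ 3 * (1 + a * x) ^ 6) ^ 2) x :=
    (ha1.comp x (hasDerivAt_phi hb ht)).div ((hlin.pow 6).const_mul (b ^ 3))
      (mul_ne_zero (pow_ne_zero 3 hb) (pow_ne_zero 6 ht))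
  refine hquot.congr_deriv ?_
  field_simp

theorem abar1_eq_div_pow_three (a1 : ℝ → ℝ) :
    abar1 a b c a1 x = a1 (phi a b c x) / (b * (1 + a * x) ^ 2) ^ 3 := by
  rw [abar1]
  ring

theorem neg_two_mul_abar0_add_deriv_abar1 {a0 a1 : ℝ → ℝ} (hb : b ≠ 0) (ht : 1 + a * x ≠ 0)
    (ha1 : DifferentiableAt ℝ a1 (phi a b c x)) :
    -2 * abar0 a b c a0 a1 x + deriv (abar1 a b c a1) x
      = (-2 * a0 (phi a b c x) + deriv a1 (phi a b c x)) / (b * (1 + a * x) ^ 2) ^ 4 := by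
  rw [(hasDerivAt_abar1 hb ht ha1.hasDerivAt).deriv, abar0]
  field_simp
  ring

end Transformation

/-- the invariant `Ψ₄^{1,1} = (−2a₀ + a₁′)³ / a₁⁴` of the canonical
form `y⁽⁴⁾ + a₁ y′ + a₀ y = 0` is an absolute invariant of the structure
invariance group. -/
theorem stmt_13 (a b c : ℝ) (hb : b ≠ 0) (a0 a1 : ℝ → ℝ) (ha1 : ContDiff ℝ 1 a1) :
    ∀ xb : ℝ, 1 + a * xb ≠ 0 → a1 (phi a b c xb) ≠ 0 →
      (-2 * abar0 a b c a0 a1 xb + deriv (abar1 a b c a1) xb) ^ 3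
        / (abar1 a b c a1 xb) ^ 4
      = (-2 * a0 (phi a b c xb) + deriv a1 (phi a b c xb)) ^ 3
        / (a1 (phi a b c xb)) ^ 4 := by
  intro xb ht _
  rw [neg_two_mul_abar0_add_deriv_abar1 hb ht (ha1.differentiable one_ne_zero _),
    abar1_eq_div_pow_three]
  exact div_pow_four_pow_three_div_div_pow_three_pow_four (mul_ne_zero hb (pow_ne_zero 2 ht))
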